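/- In the group ℤ_5 × ℤ_5, ρ±(ℤ_5 × ℤ_5, 9, 2) = 15. Moreover, the minimum is attained by a near-symmetric set and not by any symmetric set: if A is any symmetric 9-element subset of ℤ_5 × ℤ_5 (A = −A), then |2±A| ≥ 17, whereas any 9-element subset A of (a + H) ∪ (−a + H), where H is a subgroup of order 5 and a ∉ H, satisfies 2±A = H ∪ (2a + H) ∪ (−2a + H) and hence |2±A| = 15. -/
import Mathlib


open Finset Pointwise

/-- The `h`-fold sumset of a finite subset `A` of an abelian group:
`hA = {Σ λ_a • a : λ : A → ℕ, Σ λ_a = h}`. -/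
def foldSumset {G : Type*} [AddCommGroup G] (h : ℕ) (A : Finset G) : Set G :=
  {g | ∃ c : G → ℕ, (∑ a ∈ A, c a) = h ∧ (∑ a ∈ A, c a • a) = g}

/-- The `h`-fold signed sumset of a finite subset `A` of an abelian group:
`h±A = {Σ λ_a • a : λ : A → ℤ, Σ |λ_a| = h}`. -/
def foldSignedSumset {G : Type*} [AddCommGroup G] (h : ℕ) (A : Finset G) : Set G :=
  {g | ∃ c : G → ℤ, (∑ a ∈ A, (c a).natAbs) = h ∧ (∑ a ∈ A, c a • a) = g}

/-- `ρ(G, m, h) = min {|hA| : A ⊆ G, |A| = m}`. -/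
noncomputable def rho (G : Type*) [AddCommGroup G] (m h : ℕ) : ℕ :=
  sInf {k | ∃ A : Finset G, A.card = m ∧ (foldSumset h A).ncard = k}

/-- `ρ±(G, m, h) = min {|h±A| : A ⊆ G, |A| = m}`. -/
noncomputable def rhoPM (G : Type*) [AddCommGroup G] (m h : ℕ) : ℕ :=
  sInf {k | ∃ A : Finset G, A.card = m ∧ (foldSignedSumset h A).ncard = k}

/-- `f_d(m, h) = (h⌈m/d⌉ - h + 1) d`. -/
def fdmh (d m h : ℕ) : ℕ := (h * ((m + d - 1) / d) - h + 1) * d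

/-- `u(n, m, h) = min {f_d(m, h) : d a positive divisor of n}`. -/
noncomputable def uFun (n m h : ℕ) : ℕ :=
  sInf {k | ∃ d : ℕ, 0 < d ∧ d ∣ n ∧ k = fdmh d m h}

namespace RhoPMAuxZ5

abbrev G5 := ZMod 5 × ZMod 5

section Char
variable {G : Type*} [AddCommGroup G] [DecidableEq G] {A : Finset G} {a b : G}

private lemma sum_pair_support {M : Type*} [AddCommMonoid M]
    (ha : a ∈ A) (hb : b ∈ A) (hab : a ≠ b) {F : G → M}
    (hF : ∀ g ∈ A, g ≠ a → g ≠ b → F g = 0) : ∑ g ∈ A, F g = F a + F b := by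
  rw [← Finset.sum_subset
      (Finset.insert_subset ha (Finset.singleton_subset_iff.2 hb))
      (fun x hx hxn => hF x hx
        (fun h => hxn (by simp [h])) (fun h => hxn (by simp [h]))),
    Finset.sum_pair hab]

private lemma pair_mem (ha : a ∈ A) (hb : b ∈ A) (hab : a ≠ b) (σ τ : ℤ)
    (hσ : σ.natAbs = 1) (hτ : τ.natAbs = 1) : σ • a + τ • b ∈ foldSignedSumset 2 A := by
  refine ⟨fun g => if g = a then σ else if g = b then τ else 0, ?_, ?_⟩
  · rw [sum_pair_support ha hb hab (F := fun g =>
      ((if g = a then σ else if g = b then τ else 0)).natAbs)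
      (fun g _ h1 h2 => by simp [h1, h2])]
    simp [hab.symm, hσ, hτ]
  · rw [sum_pair_support ha hb hab (F := fun g =>
      (if g = a then σ else if g = b then τ else 0) • g)
      (fun g _ h1 h2 => by simp [h1, h2])]
    simp [hab.symm]

private lemma single_mem (ha : a ∈ A) (σ : ℤ) (hσ : σ.natAbs = 2) :
    σ • a ∈ foldSignedSumset 2 A := by
  refine ⟨fun g => if g = a then σ else 0, ?_, ?_⟩
  · rw [Finset.sum_eq_single_of_mem a ha (fun g _ h => by simp [h])]
    simpa using hσ
  · rw [Finset.sum_eq_single_of_mem a ha (fun g _ h => by simp [h])]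
    simp

lemma mem_foldSignedSumset_two (A : Finset G) (x : G) :
    x ∈ foldSignedSumset 2 A ↔
      ∃ a ∈ A, ∃ b ∈ A, x = a + b ∨ x = -a + -b ∨ (a ≠ b ∧ x = a - b) := by
  constructor
  · rintro ⟨c, hc2, rfl⟩
    set B := A.filter fun g => c g ≠ 0 with hB
    have hBA : B ⊆ A := Finset.filter_subset _ _
    have hsum2 : ∑ g ∈ B, (c g).natAbs = 2 := by
      rw [hB, Finset.sum_filter_of_ne (fun x _ h => Int.natAbs_ne_zero.mp h)]
      exact hc2
    have hsumx : ∑ g ∈ B, c g • g = ∑ g ∈ A, c g • g := by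
      rw [hB, Finset.sum_filter_of_ne]
      intro x _ h h0
      exact h (by rw [h0, zero_smul])
    have hcard : B.card ≤ 2 := by
      calc B.card = ∑ _g ∈ B, 1 := by simp
        _ ≤ ∑ g ∈ B, (c g).natAbs := Finset.sum_le_sum fun g hg =>
            Nat.one_le_iff_ne_zero.2 (Int.natAbs_ne_zero.2 (Finset.mem_filter.1 hg).2)
        _ = 2 := hsum2
    have hne : B.Nonempty := by
      by_contra h
      rw [Finset.not_nonempty_iff_eq_empty] at h
      rw [h] at hsum2
      simp at hsum2
    have h12 : B.card = 1 ∨ B.card = 2 := by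
      have := Finset.card_pos.2 hne; omega
    rcases h12 with h1 | h2
    · obtain ⟨u, hu⟩ := Finset.card_eq_one.1 h1
      rw [hu, Finset.sum_singleton] at hsum2
      rw [hu, Finset.sum_singleton] at hsumx
      have huA : u ∈ A := hBA (hu ▸ Finset.mem_singleton_self u)
      rcases Int.natAbs_eq_iff.1 hsum2 with h | h
      · exact ⟨u, huA, u, huA, Or.inl (by rw [← hsumx, h]; push_cast; rw [two_zsmul])⟩
      · refine ⟨u, huA, u, huA, Or.inr (Or.inl ?_)⟩
        rw [← hsumx, h]
        push_cast
        rw [neg_smul, two_zsmul, neg_add]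
    · obtain ⟨u, v, huv, hB2⟩ := Finset.card_eq_two.1 h2
      have huA : u ∈ A := hBA (hB2 ▸ Finset.mem_insert_self u {v})
      have hvA : v ∈ A := hBA (hB2 ▸ Finset.mem_insert_of_mem (Finset.mem_singleton_self v))
      rw [hB2, Finset.sum_pair huv] at hsum2
      rw [hB2, Finset.sum_pair huv] at hsumx
      have huB : u ∈ B := hB2 ▸ Finset.mem_insert_self u {v}
      have hvB : v ∈ B := hB2 ▸ Finset.mem_insert_of_mem (Finset.mem_singleton_self v)
      have hu0 : (c u).natAbs ≠ 0 := Int.natAbs_ne_zero.2 (Finset.mem_filter.1 huB).2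
      have hv0 : (c v).natAbs ≠ 0 := Int.natAbs_ne_zero.2 (Finset.mem_filter.1 hvB).2
      have hu1 : (c u).natAbs = 1 := by omega
      have hv1 : (c v).natAbs = 1 := by omega
      rcases Int.natAbs_eq_iff.1 hu1 with hcu | hcu <;>
        rcases Int.natAbs_eq_iff.1 hv1 with hcv | hcv
      · exact ⟨u, huA, v, hvA, Or.inl (by rw [← hsumx, hcu, hcv]; push_cast; simp)⟩
      · refine ⟨u, huA, v, hvA, Or.inr (Or.inr ⟨huv, ?_⟩)⟩
        rw [← hsumx, hcu, hcv]; push_cast; simp [sub_eq_add_neg]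
      · refine ⟨v, hvA, u, huA, Or.inr (Or.inr ⟨huv.symm, ?_⟩)⟩
        rw [← hsumx, hcu, hcv]; push_cast; simp [sub_eq_add_neg, add_comm]
      · refine ⟨u, huA, v, hvA, Or.inr (Or.inl ?_)⟩
        rw [← hsumx, hcu, hcv]; push_cast; simp [neg_smul]
  · rintro ⟨a, ha, b, hb, h | h | ⟨hab, h⟩⟩
    · by_cases hab : a = b
      · subst hab
        have := single_mem ha 2 rfl
        rwa [show (2:ℤ) • a = a + a from two_zsmul a, ← h] at this
      · have := pair_mem ha hb hab 1 1 rfl rfl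
        rwa [one_zsmul, one_zsmul, ← h] at this
    · by_cases hab : a = b
      · subst hab
        have := single_mem ha (-2) (by decide)
        rwa [show (-2:ℤ) • a = -a + -a by rw [neg_smul, two_zsmul, neg_add], ← h] at this
      · have := pair_mem ha hb hab (-1) (-1) (by decide) (by decide)
        rwa [neg_smul, neg_smul, one_zsmul, one_zsmul, ← h] at this
    · have := pair_mem ha hb hab 1 (-1) (by decide) (by decide)
      rwa [one_zsmul, neg_smul, one_zsmul, ← sub_eq_add_neg, ← h] at this
end Char


def fBound (n : ZMod 5 → ℕ) (k : ZMod 5) : ℕ :=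
  univ.sup fun i => if n i ≠ 0 ∧ n (k - i) ≠ 0 then min 5 (n i + n (k - i) - 1) else 0

lemma five_le_minOrder : (5 : ℕ∞) ≤ AddMonoid.minOrder G5 := by
  rw [AddMonoid.le_minOrder]
  intro x hx _
  have h5 : (5 : ℕ) • x = 0 := by
    have : ∀ y : G5, (5:ℕ) • y = 0 := by decide
    exact this x
  have hdvd : addOrderOf x ∣ 5 := addOrderOf_dvd_of_nsmul_eq_zero h5
  have := (Nat.prime_five).eq_one_or_self_of_dvd _ hdvd
  rcases this with h | h
  · exact absurd (AddMonoid.addOrderOf_eq_one_iff.1 h) hx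
  · rw [h]; exact_mod_cast le_refl _

lemma zmod5_sum {M : Type*} [AddCommMonoid M] (m : ZMod 5 → M) :
    ∑ i, m i = m 0 + m 1 + m 2 + m 3 + m 4 := by
  rw [show (univ : Finset (ZMod 5)) = {0,1,2,3,4} from by decide]
  rw [Finset.sum_insert (by decide), Finset.sum_insert (by decide),
    Finset.sum_insert (by decide), Finset.sum_insert (by decide), Finset.sum_singleton]
  abel

lemma sum_fBound_le (A : Finset G5) (φ : G5 →+ ZMod 5) :
    ∑ k, fBound (fun i => (A.filter fun x => φ x = i).card) k ≤ (A + A).card := by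
  have hpart : (A + A).card = ∑ k, ((A + A).filter fun x => φ x = k).card :=
    Finset.card_eq_sum_card_fiberwise (fun x _ => mem_univ _)
  rw [hpart]
  apply Finset.sum_le_sum
  intro k _
  apply Finset.sup_le
  intro i _
  split_ifs with h
  · set Ai := A.filter fun x => φ x = i with hAi
    set Aj := A.filter fun x => φ x = k - i with hAj
    have hne1 : Ai.Nonempty := Finset.card_pos.1 (Nat.pos_of_ne_zero h.1)
    have hne2 : Aj.Nonempty := Finset.card_pos.1 (Nat.pos_of_ne_zero h.2)
    have hcd := cauchy_davenport_minOrder_add hne1 hne2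
    have hsub : Ai + Aj ⊆ (A + A).filter fun x => φ x = k := by
      intro x hx
      obtain ⟨u, hu, v, hv, rfl⟩ := Finset.mem_add.1 hx
      obtain ⟨huA, hui⟩ := Finset.mem_filter.1 hu
      obtain ⟨hvA, hvj⟩ := Finset.mem_filter.1 hv
      refine Finset.mem_filter.2 ⟨Finset.add_mem_add huA hvA, ?_⟩
      rw [map_add, hui, hvj]
      ring
    have h1 : (5:ℕ∞) ⊓ ((Ai.card + Aj.card - 1 : ℕ) : ℕ∞) ≤ ((Ai + Aj).card : ℕ∞) :=
      le_trans (inf_le_inf_right _ five_le_minOrder) hcd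
    have h2 : min 5 (Ai.card + Aj.card - 1) ≤ (Ai + Aj).card := by
      rcases min_cases 5 (Ai.card + Aj.card - 1) with ⟨hm, hle⟩ | ⟨hm, hle⟩ <;> rw [hm]
      · have : (5:ℕ∞) ≤ ((Ai + Aj).card : ℕ∞) :=
          le_trans (le_inf (le_refl _) (by exact_mod_cast hle)) h1
        exact_mod_cast this
      · have : ((Ai.card + Aj.card - 1 : ℕ) : ℕ∞) ≤ ((Ai + Aj).card : ℕ∞) :=
          le_trans (le_inf (by exact_mod_cast hle.le) (le_refl _)) h1
        exact_mod_cast this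
    exact le_trans h2 (Finset.card_le_card hsub)
  · exact Nat.zero_le _


set_option maxRecDepth 40000 in
lemma decideAsym : ∀ a b c d e : Fin 6,
    ((a:ℕ) + b + c + d + e = 9) →
    15 ≤ ∑ k, fBound (fun i => (![a,b,c,d,e] ⟨i.val, ZMod.val_lt i⟩ : ℕ)) k := by decide


set_option maxRecDepth 40000 in
lemma decideSym : ∀ a b c : Fin 6,
    ((a:ℕ) + b + c + c + b = 9) → 3 ≤ (a:ℕ) →
    17 ≤ ∑ k, fBound (fun i => (![a,b,c,c,b] ⟨i.val, ZMod.val_lt i⟩ : ℕ)) k := by decide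

lemma fiber_card : ∀ p : G5, p ≠ 0 →
    ∀ i : ZMod 5, (univ.filter fun x : G5 => p.2 * x.1 - p.1 * x.2 = i).card = 5 := by decide

lemma fst_fiber_card : ∀ i : ZMod 5, (univ.filter fun x : G5 => x.1 = i).card = 5 := by decide



lemma card_add_self_of_nine (A : Finset G5) (hA : A.card = 9) : 15 ≤ (A + A).card := by
  let φ : G5 →+ ZMod 5 := AddMonoidHom.fst _ _
  set n : ZMod 5 → ℕ := fun i => (A.filter fun x => φ x = i).card with hn
  have hb : ∀ i, n i ≤ 5 := by
    intro i
    calc n i ≤ (univ.filter fun x : G5 => x.1 = i).card :=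
          Finset.card_le_card (Finset.filter_subset_filter _ (Finset.subset_univ A))
      _ = 5 := fst_fiber_card i
  have hsumn : ∑ i, n i = 9 := by
    rw [hn, ← Finset.card_eq_sum_card_fiberwise (f := fun x : G5 => φ x) (t := univ)
      (fun x _ => mem_univ _), hA]
  rw [zmod5_sum] at hsumn
  have hvec : (fun i : ZMod 5 =>
      (![(⟨n 0, Nat.lt_succ_of_le (hb 0)⟩ : Fin 6), ⟨n 1, Nat.lt_succ_of_le (hb 1)⟩,
        ⟨n 2, Nat.lt_succ_of_le (hb 2)⟩, ⟨n 3, Nat.lt_succ_of_le (hb 3)⟩,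
        ⟨n 4, Nat.lt_succ_of_le (hb 4)⟩] ⟨i.val, ZMod.val_lt i⟩ : ℕ)) = n := by
    funext i
    have hi : i = 0 ∨ i = 1 ∨ i = 2 ∨ i = 3 ∨ i = 4 := by revert i; decide
    rcases hi with rfl | rfl | rfl | rfl | rfl <;> rfl
  have := decideAsym ⟨n 0, Nat.lt_succ_of_le (hb 0)⟩ ⟨n 1, Nat.lt_succ_of_le (hb 1)⟩
    ⟨n 2, Nat.lt_succ_of_le (hb 2)⟩ ⟨n 3, Nat.lt_succ_of_le (hb 3)⟩
    ⟨n 4, Nat.lt_succ_of_le (hb 4)⟩ hsumn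
  rw [hvec] at this
  exact le_trans this (sum_fBound_le A φ)


lemma zero_mem_of_sym (A : Finset G5) (hA : A.card = 9) (hsym : A = -A) : (0:G5) ∈ A := by
  by_contra h0
  set f : G5 → ℕ := fun x => x.1.val * 5 + x.2.val with hf
  have hfinj : ∀ x y : G5, f x = f y → x = y := by decide
  have hneg : ∀ x : G5, x ∈ A → -x ∈ A := by
    intro x hx
    rw [hsym]
    exact Finset.neg_mem_neg hx
  set P := A.filter (fun x => f x < f (-x)) with hP
  set Q := A.filter (fun x => f (-x) < f x) with hQ
  have hU : P ∪ Q = A := by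
    apply Finset.Subset.antisymm (Finset.union_subset (Finset.filter_subset _ _) (Finset.filter_subset _ _))
    intro x hx
    rcases lt_trichotomy (f x) (f (-x)) with h | h | h
    · exact Finset.mem_union_left _ (Finset.mem_filter.2 ⟨hx, h⟩)
    · exfalso
      have hx0 : x = -x := hfinj _ _ h
      have : x = 0 := by
        have : ∀ y : G5, y = -y → y = 0 := by decide
        exact this x hx0
      exact h0 (this ▸ hx)
    · exact Finset.mem_union_right _ (Finset.mem_filter.2 ⟨hx, h⟩)
  have hD : Disjoint P Q := by
    rw [Finset.disjoint_left]
    intro x hx hx'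
    exact absurd ((Finset.mem_filter.1 hx').2) (not_lt.2 (le_of_lt (Finset.mem_filter.1 hx).2))
  have hQP : Q = P.image (fun x => -x) := by
    ext y
    simp only [Finset.mem_image]
    constructor
    · intro hy
      obtain ⟨hyA, hlt⟩ := Finset.mem_filter.1 hy
      exact ⟨-y, Finset.mem_filter.2 ⟨hneg y hyA, by rwa [neg_neg]⟩, neg_neg y⟩
    · rintro ⟨x, hx, rfl⟩
      obtain ⟨hxA, hlt⟩ := Finset.mem_filter.1 hx
      exact Finset.mem_filter.2 ⟨hneg x hxA, by rwa [neg_neg]⟩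
  have hcQ : Q.card = P.card := by
    rw [hQP, Finset.card_image_of_injective _ neg_injective]
  have : A.card = 2 * P.card := by
    rw [← hU, Finset.card_union_of_disjoint hD, hcQ]; ring
  omega

lemma card_add_self_of_sym (A : Finset G5) (hA : A.card = 9) (hsym : A = -A) :
    17 ≤ (A + A).card := by
  have h0A : (0:G5) ∈ A := zero_mem_of_sym A hA hsym
  have hneg : ∀ x : G5, x ∈ A → -x ∈ A := by
    intro x hx; rw [hsym]; exact Finset.neg_mem_neg hx
  -- pick p ∈ A, p ≠ 0
  have hne : (A.erase 0).Nonempty := by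
    rw [← Finset.card_pos, Finset.card_erase_of_mem h0A, hA]; norm_num
  obtain ⟨p, hp⟩ := hne
  have hp0 : p ≠ 0 := Finset.ne_of_mem_erase hp
  have hpA : p ∈ A := Finset.mem_of_mem_erase hp
  let φ : G5 →+ ZMod 5 := AddMonoidHom.mk' (fun x => p.2 * x.1 - p.1 * x.2)
    (by intro x y; simp only [Prod.fst_add, Prod.snd_add]; ring)
  set n : ZMod 5 → ℕ := fun i => (A.filter fun x => φ x = i).card with hn
  have hb : ∀ i, n i ≤ 5 := by
    intro i
    calc n i ≤ (univ.filter fun x : G5 => p.2 * x.1 - p.1 * x.2 = i).card :=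
          Finset.card_le_card (Finset.filter_subset_filter _ (Finset.subset_univ A))
      _ = 5 := fiber_card p hp0 i
  have hsumn : ∑ i, n i = 9 := by
    rw [hn, ← Finset.card_eq_sum_card_fiberwise (f := fun x : G5 => φ x) (t := univ)
      (fun x _ => mem_univ _), hA]
  rw [zmod5_sum] at hsumn
  -- symmetry of fibers
  have hnsym : ∀ i, n (-i) = n i := by
    intro i
    have himg : A.filter (fun x => φ x = -i) = (A.filter fun x => φ x = i).image (fun x => -x) := by
      ext y
      simp only [Finset.mem_image, Finset.mem_filter]
      constructor
      · rintro ⟨hyA, hy⟩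
        refine ⟨-y, ⟨hneg y hyA, ?_⟩, neg_neg y⟩
        rw [map_neg, hy, neg_neg]
      · rintro ⟨x, ⟨hxA, hx⟩, rfl⟩
        exact ⟨hneg x hxA, by rw [map_neg, hx]⟩
    rw [hn]
    simp only []
    rw [himg, Finset.card_image_of_injective _ neg_injective]
  -- n 0 ≥ 3
  have hppn : p ≠ -p := by
    intro h
    have : ∀ y : G5, y = -y → y = 0 := by decide
    exact hp0 (this p h)
  have h3 : 3 ≤ n 0 := by
    have e2 : φ p = 0 := by
      show p.2 * p.1 - p.1 * p.2 = 0
      ring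
    have e3 : φ (-p) = 0 := by rw [map_neg, e2, neg_zero]
    have hsub : ({0, p, -p} : Finset G5) ⊆ A.filter (fun x => φ x = 0) := by
      intro x hx
      simp only [Finset.mem_insert, Finset.mem_singleton] at hx
      rcases hx with rfl | rfl | rfl
      · exact Finset.mem_filter.2 ⟨h0A, map_zero φ⟩
      · exact Finset.mem_filter.2 ⟨hpA, e2⟩
      · exact Finset.mem_filter.2 ⟨hneg p hpA, e3⟩
    have h0p : (0:G5) ∉ ({p, -p} : Finset G5) := by
      simp only [Finset.mem_insert, Finset.mem_singleton]
      push_neg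
      exact ⟨fun h => hp0 h.symm, fun h => hp0 (neg_eq_zero.1 h.symm)⟩
    have hcard : ({0, p, -p} : Finset G5).card = 3 := by
      rw [Finset.card_insert_of_notMem h0p,
        Finset.card_insert_of_notMem (by simpa using hppn), Finset.card_singleton]
    calc 3 = ({0, p, -p} : Finset G5).card := hcard.symm
      _ ≤ n 0 := Finset.card_le_card hsub
  -- apply decideSym
  have h23 : n 3 = n 2 := by
    rw [show (3 : ZMod 5) = -2 from by decide]
    exact hnsym 2
  have h14 : n 4 = n 1 := by
    rw [show (4 : ZMod 5) = -1 from by decide]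
    exact hnsym 1
  have hvec : (fun i : ZMod 5 =>
      (![(⟨n 0, Nat.lt_succ_of_le (hb 0)⟩ : Fin 6), ⟨n 1, Nat.lt_succ_of_le (hb 1)⟩,
        ⟨n 2, Nat.lt_succ_of_le (hb 2)⟩, ⟨n 2, Nat.lt_succ_of_le (hb 2)⟩,
        ⟨n 1, Nat.lt_succ_of_le (hb 1)⟩] ⟨i.val, ZMod.val_lt i⟩ : ℕ)) = n := by
    funext i
    have hi : i = 0 ∨ i = 1 ∨ i = 2 ∨ i = 3 ∨ i = 4 := by revert i; decide
    rcases hi with rfl | rfl | rfl | rfl | rfl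
    · rfl
    · rfl
    · rfl
    · exact h23.symm
    · exact h14.symm
  have := decideSym ⟨n 0, Nat.lt_succ_of_le (hb 0)⟩ ⟨n 1, Nat.lt_succ_of_le (hb 1)⟩
    ⟨n 2, Nat.lt_succ_of_le (hb 2)⟩ (by simp only []; omega) (by simp only []; omega)
  rw [hvec] at this
  exact le_trans this (sum_fBound_le A φ)


set_option maxHeartbeats 1000000 in
lemma part3 (H : AddSubgroup G5) (a : G5) (hH : Nat.card H = 5) (ha : a ∉ H)
    (A : Finset G5) (hA : A.card = 9)
    (hsub : (↑A : Set G5) ⊆ {x | x - a ∈ H} ∪ {x | x + a ∈ H}) :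
    foldSignedSumset 2 A = (H : Set G5) ∪ {x | x - 2 • a ∈ H} ∪ {x | x + 2 • a ∈ H} ∧
    (foldSignedSumset 2 A).ncard = 15 := by
  classical
  have h2aeq : (2 • a : G5) = a + a := two_nsmul a
  rw [h2aeq]
  -- arithmetic facts
  have h3x : ∀ x : G5, (3:ℕ) • (x + x) = x := by decide
  have h4x : ∀ x : G5, (4:ℕ) • (x + x + (x + x)) = x := by decide
  have h2a : a + a ∉ H := by
    intro h
    apply ha
    have h3 := H.nsmul_mem h 3
    rwa [h3x a] at h3
  have h4a : (a + a) + (a + a) ∉ H := by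
    intro h
    apply ha
    have h4 := H.nsmul_mem h 4
    rwa [h4x a] at h4
  -- finsets
  set Hf : Finset G5 := univ.filter (· ∈ H) with hHf
  have hHf5 : Hf.card = 5 := by
    rw [hHf, ← Fintype.card_subtype]
    rw [← Nat.card_eq_fintype_card]
    exact hH
  set Ca : Finset G5 := univ.filter (fun x => x - a ∈ H) with hCadef
  set Cma : Finset G5 := univ.filter (fun x => x + a ∈ H) with hCmadef
  have hCa5 : Ca.card = 5 := by
    have : Ca = Hf.image (· + a) := by
      ext x
      simp only [hCadef, hHf, Finset.mem_image, Finset.mem_filter, Finset.mem_univ, true_and]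
      constructor
      · intro hx
        exact ⟨x - a, hx, by abel⟩
      · rintro ⟨h, hh, rfl⟩
        rwa [show h + a - a = h from by abel]
    rw [this, Finset.card_image_of_injective _ (add_left_injective a), hHf5]
  have hCma5 : Cma.card = 5 := by
    have : Cma = Hf.image (· - a) := by
      ext x
      simp only [hCmadef, hHf, Finset.mem_image, Finset.mem_filter, Finset.mem_univ, true_and]
      constructor
      · intro hx
        exact ⟨x + a, hx, by abel⟩
      · rintro ⟨h, hh, rfl⟩
        rwa [show h - a + a = h from by abel]
    rw [this, Finset.card_image_of_injective _ sub_left_injective, hHf5]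
  set B : Finset G5 := A.filter (fun x => x - a ∈ H) with hBdef
  set C : Finset G5 := A.filter (fun x => x + a ∈ H) with hCdef
  have hmem : ∀ y ∈ A, y - a ∈ H ∨ y + a ∈ H := by
    intro y hy
    exact hsub (Finset.mem_coe.2 hy)
  have hBC : B ∪ C = A := by
    apply Finset.Subset.antisymm
      (Finset.union_subset (Finset.filter_subset _ _) (Finset.filter_subset _ _))
    intro x hx
    rcases hmem x hx with h | h
    · exact Finset.mem_union_left _ (Finset.mem_filter.2 ⟨hx, h⟩)
    · exact Finset.mem_union_right _ (Finset.mem_filter.2 ⟨hx, h⟩)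
  have hdisj : Disjoint B C := by
    rw [Finset.disjoint_left]
    intro x hx hx'
    apply h2a
    have h1 := (Finset.mem_filter.1 hx).2
    have h2 := (Finset.mem_filter.1 hx').2
    have := H.sub_mem h2 h1
    rwa [show x + a - (x - a) = a + a from by abel] at this
  have hcardBC : B.card + C.card = 9 := by
    rw [← Finset.card_union_of_disjoint hdisj, hBC, hA]
  have hBA : B ⊆ A := Finset.filter_subset _ _
  have hCA : C ⊆ A := Finset.filter_subset _ _
  have hBCa : B ⊆ Ca := by
    intro x hx
    exact Finset.mem_filter.2 ⟨Finset.mem_univ x, (Finset.mem_filter.1 hx).2⟩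
  have hCCma : C ⊆ Cma := by
    intro x hx
    exact Finset.mem_filter.2 ⟨Finset.mem_univ x, (Finset.mem_filter.1 hx).2⟩
  have hcB5 : B.card ≤ 5 := hCa5 ▸ Finset.card_le_card hBCa
  have hcC5 : C.card ≤ 5 := hCma5 ▸ Finset.card_le_card hCCma
  -- pigeonhole
  have pigeon : ∀ P Q R : Finset G5, P ⊆ R → Q ⊆ R → R.card = 5 → 5 < P.card + Q.card →
      ∃ x, x ∈ P ∧ x ∈ Q := by
    intro P Q R hPR hQR hR5 hlt
    have h1 : (P ∪ Q).card ≤ R.card := Finset.card_le_card (Finset.union_subset hPR hQR)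
    have h2 := Finset.card_union_add_card_inter P Q
    have h3 : 0 < (P ∩ Q).card := by omega
    obtain ⟨x, hx⟩ := Finset.card_pos.1 h3
    exact ⟨x, Finset.mem_inter.1 hx⟩
  -- the equality
  have hEq : foldSignedSumset 2 A =
      (H : Set G5) ∪ {x | x - (a + a) ∈ H} ∪ {x | x + (a + a) ∈ H} := by
    ext x
    rw [mem_foldSignedSumset_two]
    constructor
    · rintro ⟨u, hu, v, hv, hcase⟩
      rcases hmem u hu with hu1 | hu1 <;> rcases hmem v hv with hv1 | hv1 <;>
        rcases hcase with rfl | rfl | ⟨huv, rfl⟩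
      -- u ∈ B, v ∈ B
      · refine Or.inl (Or.inr ?_)
        have h := H.add_mem hu1 hv1
        rwa [show u - a + (v - a) = u + v - (a + a) from by abel] at h
      · refine Or.inr ?_
        have h := H.neg_mem (H.add_mem hu1 hv1)
        rwa [show -(u - a + (v - a)) = -u + -v + (a + a) from by abel] at h
      · refine Or.inl (Or.inl ?_)
        have h := H.sub_mem hu1 hv1
        rwa [show u - a - (v - a) = u - v from by abel] at h
      -- u ∈ B, v ∈ C
      · refine Or.inl (Or.inl ?_)
        have h := H.add_mem hu1 hv1
        rwa [show u - a + (v + a) = u + v from by abel] at h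
      · refine Or.inl (Or.inl ?_)
        have h := H.neg_mem (H.add_mem hu1 hv1)
        rwa [show -(u - a + (v + a)) = -u + -v from by abel] at h
      · refine Or.inl (Or.inr ?_)
        have h := H.sub_mem hu1 hv1
        rwa [show u - a - (v + a) = u - v - (a + a) from by abel] at h
      -- u ∈ C, v ∈ B
      · refine Or.inl (Or.inl ?_)
        have h := H.add_mem hu1 hv1
        rwa [show u + a + (v - a) = u + v from by abel] at h
      · refine Or.inl (Or.inl ?_)
        have h := H.neg_mem (H.add_mem hu1 hv1)
        rwa [show -(u + a + (v - a)) = -u + -v from by abel] at h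
      · refine Or.inr ?_
        have h := H.sub_mem hu1 hv1
        rwa [show u + a - (v - a) = u - v + (a + a) from by abel] at h
      -- u ∈ C, v ∈ C
      · refine Or.inr ?_
        have h := H.add_mem hu1 hv1
        rwa [show u + a + (v + a) = u + v + (a + a) from by abel] at h
      · refine Or.inl (Or.inr ?_)
        have h := H.neg_mem (H.add_mem hu1 hv1)
        rwa [show -(u + a + (v + a)) = -u + -v - (a + a) from by abel] at h
      · refine Or.inl (Or.inl ?_)
        have h := H.sub_mem hu1 hv1
        rwa [show u + a - (v + a) = u - v from by abel] at h
    · rintro ((hx | hx) | hx)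
      · -- x ∈ H : use B + C
        have hQ : C.image (fun y => x - y) ⊆ Ca := by
          intro z hz
          obtain ⟨y, hy, rfl⟩ := Finset.mem_image.1 hz
          refine Finset.mem_filter.2 ⟨Finset.mem_univ _, ?_⟩
          have h := H.sub_mem hx (Finset.mem_filter.1 hy).2
          rwa [show x - (y + a) = x - y - a from by abel] at h
        have hcQ : (C.image (fun y => x - y)).card = C.card :=
          Finset.card_image_of_injective _ sub_right_injective
        obtain ⟨u, huB, huQ⟩ := pigeon B (C.image (fun y => x - y)) Ca hBCa hQ hCa5 (by omega)
        obtain ⟨y, hy, hxy⟩ := Finset.mem_image.1 huQ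
        refine ⟨u, hBA huB, y, hCA hy, Or.inl ?_⟩
        rw [← hxy]; abel
      · -- x - (a+a) ∈ H : use B + B
        have hQ : B.image (fun y => x - y) ⊆ Ca := by
          intro z hz
          obtain ⟨y, hy, rfl⟩ := Finset.mem_image.1 hz
          refine Finset.mem_filter.2 ⟨Finset.mem_univ _, ?_⟩
          have h := H.sub_mem hx (Finset.mem_filter.1 hy).2
          rwa [show x - (a + a) - (y - a) = x - y - a from by abel] at h
        have hcQ : (B.image (fun y => x - y)).card = B.card :=
          Finset.card_image_of_injective _ sub_right_injective
        obtain ⟨u, huB, huQ⟩ := pigeon B (B.image (fun y => x - y)) Ca hBCa hQ hCa5 (by omega)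
        obtain ⟨y, hy, hxy⟩ := Finset.mem_image.1 huQ
        refine ⟨u, hBA huB, y, hBA hy, Or.inl ?_⟩
        rw [← hxy]; abel
      · -- x + (a+a) ∈ H : use C + C
        have hQ : C.image (fun y => x - y) ⊆ Cma := by
          intro z hz
          obtain ⟨y, hy, rfl⟩ := Finset.mem_image.1 hz
          refine Finset.mem_filter.2 ⟨Finset.mem_univ _, ?_⟩
          have h := H.sub_mem hx (Finset.mem_filter.1 hy).2
          rwa [show x + (a + a) - (y + a) = x - y + a from by abel] at h
        have hcQ : (C.image (fun y => x - y)).card = C.card :=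
          Finset.card_image_of_injective _ sub_right_injective
        obtain ⟨u, huC, huQ⟩ := pigeon C (C.image (fun y => x - y)) Cma hCCma hQ hCma5 (by omega)
        obtain ⟨y, hy, hxy⟩ := Finset.mem_image.1 huQ
        refine ⟨u, hCA huC, y, hCA hy, Or.inl ?_⟩
        rw [← hxy]; abel
  refine ⟨hEq, ?_⟩
  rw [hEq]
  -- cardinality
  have hH5 : (H : Set G5).ncard = 5 := by
    rw [← Nat.card_coe_set_eq]
    exact hH
  have hS2 : ({x : G5 | x - (a + a) ∈ H}).ncard = 5 := by
    have himg : {x : G5 | x - (a + a) ∈ H} = (fun h => h + (a + a)) '' (H : Set G5) := by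
      ext x
      constructor
      · intro hx
        exact ⟨x - (a + a), hx, sub_add_cancel x (a + a)⟩
      · rintro ⟨h, hh, rfl⟩
        show h + (a + a) - (a + a) ∈ H
        rwa [add_sub_cancel_right]
    rw [himg, Set.ncard_image_of_injective _ (add_left_injective _), hH5]
  have hS3 : ({x : G5 | x + (a + a) ∈ H}).ncard = 5 := by
    have himg : {x : G5 | x + (a + a) ∈ H} = (fun h => h - (a + a)) '' (H : Set G5) := by
      ext x
      constructor
      · intro hx
        exact ⟨x + (a + a), hx, add_sub_cancel_right x (a + a)⟩
      · rintro ⟨h, hh, rfl⟩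
        show h - (a + a) + (a + a) ∈ H
        rwa [sub_add_cancel]
    rw [himg, Set.ncard_image_of_injective _ sub_left_injective, hH5]
  have hd1 : Disjoint (H : Set G5) {x : G5 | x - (a + a) ∈ H} := by
    rw [Set.disjoint_left]
    intro x hx hx'
    apply h2a
    have := H.sub_mem hx hx'
    rwa [show x - (x - (a + a)) = a + a from by abel] at this
  have hd2 : Disjoint ((H : Set G5) ∪ {x : G5 | x - (a + a) ∈ H}) {x : G5 | x + (a + a) ∈ H} := by
    rw [Set.disjoint_left]
    rintro x (hx | hx) hx'
    · apply h2a
      have := H.sub_mem hx' hx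
      rwa [show x + (a + a) - x = a + a from by abel] at this
    · apply h4a
      have := H.sub_mem hx' hx
      rwa [show x + (a + a) - (x - (a + a)) = a + a + (a + a) from by abel] at this
  rw [Set.ncard_union_eq hd2 (Set.toFinite _) (Set.toFinite _),
    Set.ncard_union_eq hd1 (Set.toFinite _) (Set.toFinite _), hH5, hS2, hS3]


lemma coe_add_subset (A : Finset G5) : (↑(A + A) : Set G5) ⊆ foldSignedSumset 2 A := by
  intro x hx
  obtain ⟨u, hu, v, hv, rfl⟩ := Finset.mem_add.1 (Finset.mem_coe.1 hx)
  exact (mem_foldSignedSumset_two A _).2 ⟨u, hu, v, hv, Or.inl rfl⟩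

lemma sym_eq (A : Finset G5) (hsym : A = -A) :
    foldSignedSumset 2 A = (↑(A + A) : Set G5) := by
  apply Set.Subset.antisymm _ (coe_add_subset A)
  intro x hx
  have hneg : ∀ y : G5, y ∈ A → -y ∈ A := by
    intro y hy; rw [hsym]; exact Finset.neg_mem_neg hy
  obtain ⟨u, hu, v, hv, hcase⟩ := (mem_foldSignedSumset_two A x).1 hx
  rcases hcase with rfl | rfl | ⟨huv, rfl⟩
  · exact Finset.mem_coe.2 (Finset.add_mem_add hu hv)
  · exact Finset.mem_coe.2 (Finset.add_mem_add (hneg u hu) (hneg v hv))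
  · rw [sub_eq_add_neg]
    exact Finset.mem_coe.2 (Finset.add_mem_add hu (hneg v hv))

-- the explicit example
def H₀ : AddSubgroup G5 where
  carrier := {x | x.2 = 0}
  add_mem' := by
    intro x y hx hy
    show (x + y).2 = 0
    rw [Prod.snd_add]
    rw [show x.2 = 0 from hx, show y.2 = 0 from hy, add_zero]
  zero_mem' := rfl
  neg_mem' := by
    intro x hx
    show (-x).2 = 0
    rw [Prod.snd_neg, show x.2 = 0 from hx, neg_zero]

def A₀ : Finset G5 := {(0,1),(1,1),(2,1),(3,1),(4,1),(0,4),(1,4),(2,4),(3,4)}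

lemma hH₀card : Nat.card H₀ = 5 := by
  letI : DecidablePred (· ∈ H₀) := fun x => (inferInstance : Decidable (x.2 = 0))
  rw [Nat.card_eq_fintype_card]
  decide

lemma ha₀ : ((0,1) : G5) ∉ H₀ := by
  intro h
  have : ((1:ZMod 5) = 0) := h
  exact absurd this (by decide)

lemma hA₀card : A₀.card = 9 := by decide

lemma hA₀sub : (↑A₀ : Set G5) ⊆ {x | x - (0,1) ∈ H₀} ∪ {x | x + (0,1) ∈ H₀} := by
  intro x hx
  have hx' : x ∈ A₀ := Finset.mem_coe.1 hx
  simp only [A₀, Finset.mem_insert, Finset.mem_singleton] at hx'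
  rcases hx' with rfl|rfl|rfl|rfl|rfl|rfl|rfl|rfl|rfl
  · exact Or.inl (show ((1:ZMod 5) - 1 = 0) from by decide)
  · exact Or.inl (show ((1:ZMod 5) - 1 = 0) from by decide)
  · exact Or.inl (show ((1:ZMod 5) - 1 = 0) from by decide)
  · exact Or.inl (show ((1:ZMod 5) - 1 = 0) from by decide)
  · exact Or.inl (show ((1:ZMod 5) - 1 = 0) from by decide)
  · exact Or.inr (show ((4:ZMod 5) + 1 = 0) from by decide)
  · exact Or.inr (show ((4:ZMod 5) + 1 = 0) from by decide)
  · exact Or.inr (show ((4:ZMod 5) + 1 = 0) from by decide)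
  · exact Or.inr (show ((4:ZMod 5) + 1 = 0) from by decide)


end RhoPMAuxZ5

open RhoPMAuxZ5 in
/-- `ρ±(ℤ_5 × ℤ_5, 9, 2) = 15`; symmetric 9-sets have `|2±A| ≥ 17`,
while 9-subsets of `(a + H) ∪ (-a + H)` achieve `2±A = H ∪ (2a + H) ∪ (-2a + H)`,
of size 15. -/
theorem rhoPM_Z5_Z5_nine_two :
    rhoPM (ZMod 5 × ZMod 5) 9 2 = 15 ∧
    (∀ A : Finset (ZMod 5 × ZMod 5), A.card = 9 → A = -A →
      17 ≤ (foldSignedSumset 2 A).ncard) ∧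
    (∀ (H : AddSubgroup (ZMod 5 × ZMod 5)) (a : ZMod 5 × ZMod 5),
      Nat.card H = 5 → a ∉ H →
      ∀ A : Finset (ZMod 5 × ZMod 5), A.card = 9 →
        (↑A : Set (ZMod 5 × ZMod 5)) ⊆ {x | x - a ∈ H} ∪ {x | x + a ∈ H} →
        foldSignedSumset 2 A =
          (H : Set (ZMod 5 × ZMod 5)) ∪ {x | x - 2 • a ∈ H} ∪ {x | x + 2 • a ∈ H} ∧
        (foldSignedSumset 2 A).ncard = 15) := by
  refine ⟨?_, ?_, fun H a hH ha A hA hsub => part3 H a hH ha A hA hsub⟩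
  · -- rhoPM = 15
    have hmem : 15 ∈ {k | ∃ A : Finset G5, A.card = 9 ∧ (foldSignedSumset 2 A).ncard = k} :=
      ⟨A₀, hA₀card, (part3 H₀ (0,1) hH₀card ha₀ A₀ hA₀card hA₀sub).2⟩
    have hlb : ∀ k ∈ {k | ∃ A : Finset G5, A.card = 9 ∧ (foldSignedSumset 2 A).ncard = k},
        15 ≤ k := by
      rintro k ⟨A, hA, rfl⟩
      calc (15:ℕ) ≤ (A + A).card := card_add_self_of_nine A hA
        _ = (↑(A + A) : Set G5).ncard := (Set.ncard_coe_finset _).symm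
        _ ≤ (foldSignedSumset 2 A).ncard :=
            Set.ncard_le_ncard (coe_add_subset A) (Set.toFinite _)
    exact le_antisymm (Nat.sInf_le hmem) (le_csInf ⟨15, hmem⟩ hlb)
  · intro A hA hsym
    rw [sym_eq A hsym, Set.ncard_coe_finset]
    exact card_add_self_of_sym A hA hsym
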